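/- arXiv:1912.00883 — 4 statements merged into one kernel-verified Lean document; each statement's English description precedes it below -/
import Mathlib

section
/- Let α be normal in F_{q^n} over F_q, write x^n − 1 = f_1^τ ⋯ f_r^τ with f_i distinct irreducibles in F_q[x] and τ = p^{v_p(n)}. Let β = g ∘ α and g_i = g mod f_i^τ. Then β is normal if and only if gcd(f_i, g_i) = 1 for each i = 1, ..., r. -/
open Polynomial

variable {Fq Fqn : Type*}

/-- Frobenius action of a polynomial on a field element: `f ∘ α = Σ aᵢ α^(q^i)`. -/
noncomputable def circ [Field Fq] [Field Fqn] [Algebra Fq Fqn] (q : ℕ) (f : Fq[X]) (α : Fqn) : Fqn :=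
  f.sum fun i a => algebraMap Fq Fqn a * α ^ q ^ i

/-- `α` is a normal element: its conjugates `α, α^q, …, α^(q^(n-1))` form an `Fq`-basis. -/
def IsNormal (Fq : Type*) {Fqn : Type*} [Field Fq] [Field Fqn] [Algebra Fq Fqn]
    (q n : ℕ) (α : Fqn) : Prop :=
  LinearIndependent Fq (fun i : Fin n => α ^ q ^ (i : ℕ)) ∧
    Submodule.span Fq (Set.range fun i : Fin n => α ^ q ^ (i : ℕ)) = ⊤

/-- `A` is the annihilator of `α`: the monic polynomial of least degree with `A ∘ α = 0`. -/
def IsAnnihilator [Field Fq] [Field Fqn] [Algebra Fq Fqn] (q : ℕ) (α : Fqn) (A : Fq[X]) : Prop :=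
  A.Monic ∧ circ q A α = 0 ∧ ∀ B : Fq[X], B.Monic → circ q B α = 0 → A.degree ≤ B.degree

/-!
The `q`-Frobenius `σ` is an `F_q`-linear operator on `F_{q^n}` with `σ ^ n = 1`, and
`g ∘ α = g(σ) α`. Normality of `γ` says that no nonzero polynomial of degree `< n` kills `γ`
under `σ`. If `g` is coprime to `x ^ n - 1`, a Bézout cofactor `u` gives `α = u(σ) β`, so `β`
inherits this from `α`; otherwise `(x ^ n - 1) / gcd(g, x ^ n - 1)` kills `β`. Finally `g` is
coprime to `∏ fᵢ ^ τ` iff each `fᵢ` is coprime to `g`, i.e. to `g mod fᵢ ^ τ`.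
-/

theorem isCoprime_mod_pow_iff {R : Type*} [EuclideanDomain R] {a b : R} {k : ℕ} (hk : k ≠ 0) :
    IsCoprime a (b % a ^ k) ↔ IsCoprime a b := by
  obtain ⟨k, rfl⟩ := Nat.exists_eq_succ_of_ne_zero hk
  rw [EuclideanDomain.mod_eq_sub_mul_div, sub_eq_add_neg, pow_succ', mul_assoc, ← mul_neg,
    IsCoprime.add_mul_left_right_iff]

theorem isCoprime_prod_pow_iff_forall_isCoprime_mod {R ι : Type*} [EuclideanDomain R] [Fintype ι]
    (f : ι → R) (g : R) {k : ℕ} (hk : k ≠ 0) :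
    IsCoprime g (∏ i, f i ^ k) ↔ ∀ i, IsCoprime (f i) (g % f i ^ k) := by
  simp [IsCoprime.prod_right_iff, IsCoprime.pow_right_iff (Nat.pos_of_ne_zero hk),
    isCoprime_mod_pow_iff hk, isCoprime_comm]

section CyclicVectors

variable {K V : Type*} [Field K] [AddCommGroup V] [Module K V] (T : Module.End K V)

theorem aeval_apply_eq_sum_fin {n : ℕ} {h : K[X]} (hdeg : h.degree < n) (v : V) :
    aeval T h v = ∑ i : Fin n, h.coeff i • (T ^ (i : ℕ)) v := by
  rw [aeval_def, eval₂_eq_sum, ← sum_fin (fun e a => algebraMap K (Module.End K V) a * T ^ e)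
    (by simp) hdeg, LinearMap.sum_apply]
  simp [Module.algebraMap_end_apply]

theorem linearIndependent_pow_apply_iff_forall_aeval_eq_zero {n : ℕ} {w : V} :
    LinearIndependent K (fun i : Fin n => (T ^ (i : ℕ)) w) ↔
      ∀ h : K[X], h.degree < n → aeval T h w = 0 → h = 0 := by
  rw [Fintype.linearIndependent_iff]
  constructor
  · intro hli h hdeg hh
    have hcoeff := hli (fun i => h.coeff i) (by rw [← aeval_apply_eq_sum_fin T hdeg, hh])
    ext j
    rcases lt_or_ge j n with hj | hj
    · exact hcoeff ⟨j, hj⟩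
    · exact coeff_eq_zero_of_degree_lt (hdeg.trans_le (by exact_mod_cast hj))
  · intro hann c hc i
    set h := ((degreeLTEquiv K n).symm c : K[X])
    have hcoeff : ∀ j : Fin n, h.coeff j = c j := fun j =>
      congr_fun ((degreeLTEquiv K n).apply_symm_apply c) j
    have hdeg : h.degree < n := mem_degreeLT.mp ((degreeLTEquiv K n).symm c).2
    have h0 := hann h hdeg (by simp only [aeval_apply_eq_sum_fin T hdeg, hcoeff, hc])
    rw [← hcoeff, h0, coeff_zero]

theorem linearIndependent_pow_apply_aeval_iff_isCoprime {n : ℕ} {P : K[X]} (hPdeg : P.degree = n)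
    (hPT : aeval T P = 0) {v : V} (hv : LinearIndependent K fun i : Fin n => (T ^ (i : ℕ)) v)
    (g : K[X]) :
    LinearIndependent K (fun i : Fin n => (T ^ (i : ℕ)) (aeval T g v)) ↔ IsCoprime g P := by
  classical
  have hP : P ≠ 0 := ne_zero_of_coe_le_degree hPdeg.ge
  rw [linearIndependent_pow_apply_iff_forall_aeval_eq_zero, ← hPdeg] at hv ⊢
  constructor
  · intro hann
    by_contra hcop
    obtain ⟨g', hg'⟩ := EuclideanDomain.gcd_dvd_left g P
    obtain ⟨h, hh⟩ := EuclideanDomain.gcd_dvd_right g P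
    set d := EuclideanDomain.gcd g P
    have hd : d ≠ 0 := left_ne_zero_of_mul (hh ▸ hP)
    have hh0 : h ≠ 0 := right_ne_zero_of_mul (hh ▸ hP)
    have hdeg : h.degree < P.degree := by
      have hd_pos : 0 < d.natDegree := natDegree_pos_iff_degree_pos.mpr
        (degree_pos_of_ne_zero_of_nonunit hd (mt EuclideanDomain.gcd_isUnit_iff.mp hcop))
      rw [degree_eq_natDegree hh0, degree_eq_natDegree hP, hh, natDegree_mul hd hh0]
      exact_mod_cast (by omega)
    apply hh0
    refine hann h hdeg ?_
    rw [← Module.End.mul_apply, ← map_mul, hg', show h * (d * g') = P * g' by rw [hh]; ring,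
      map_mul, hPT, zero_mul, LinearMap.zero_apply]
  · rintro ⟨u, w, huv⟩ h hdeg hh
    refine hv h hdeg ?_
    calc aeval T h v = aeval T (u * (h * g) + h * w * P) v := by
          rw [show u * (h * g) + h * w * P = h * (u * g + w * P) by ring, huv, mul_one]
      _ = 0 := by
          rw [map_add, map_mul, map_mul, map_mul (aeval T) (h * w), hPT, mul_zero, add_zero,
            Module.End.mul_apply, Module.End.mul_apply, hh, map_zero]

end CyclicVectors

open FiniteField

theorem isNormal_iff_linearIndependent [Field Fq] [Field Fqn] [Algebra Fq Fqn] {q n : ℕ}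
    (hn : 0 < n) (hrank : Module.finrank Fq Fqn = n) {γ : Fqn} :
    IsNormal Fq q n γ ↔ LinearIndependent Fq fun i : Fin n => γ ^ q ^ (i : ℕ) :=
  have : Nonempty (Fin n) := ⟨⟨0, hn⟩⟩
  ⟨And.left, fun h => ⟨h, h.span_eq_top_of_card_eq_finrank (by simp [hrank])⟩⟩

section Frobenius

variable [Field Fq] [Fintype Fq] [Field Fqn] [Algebra Fq Fqn]

theorem frobeniusAlgHom_toLinearMap_pow_apply (i : ℕ) (x : Fqn) :
    ((frobeniusAlgHom Fq Fqn).toLinearMap ^ i) x = x ^ Fintype.card Fq ^ i := by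
  rw [Module.End.coe_pow, AlgHom.coe_toLinearMap, coe_frobeniusAlgHom, pow_iterate]

theorem circ_eq_aeval_frobeniusAlgHom (g : Fq[X]) (α : Fqn) :
    circ (Fintype.card Fq) g α = aeval (frobeniusAlgHom Fq Fqn).toLinearMap g α := by
  rw [circ, aeval_def, eval₂_eq_sum, Polynomial.sum, Polynomial.sum, LinearMap.sum_apply]
  simp [frobeniusAlgHom_toLinearMap_pow_apply, Module.algebraMap_end_apply, Algebra.smul_def]

end Frobenius

theorem stmt7_general (p q n : ℕ) [Field Fq] [Fintype Fq] [Field Fqn] [Algebra Fq Fqn]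
    (hp : p.Prime) (hcard : Fintype.card Fq = q)
    (hn : 0 < n) (hrank : Module.finrank Fq Fqn = n)
    (r : ℕ) (f : Fin r → Fq[X])
    (hfact : (X : Fq[X]) ^ n - 1 = ∏ i, f i ^ p ^ padicValNat p n)
    (α : Fqn) (hα : IsNormal Fq q n α) (g : Fq[X]) :
    IsNormal Fq q n (circ q g α) ↔ ∀ i, IsCoprime (f i) (g % f i ^ p ^ padicValNat p n) := by
  subst hcard
  have : FiniteDimensional Fq Fqn := .of_finrank_pos (hrank ▸ hn)
  have : Finite Fqn := Module.finite_of_finite Fq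
  have hP : aeval (frobeniusAlgHom Fq Fqn).toLinearMap (X ^ n - 1 : Fq[X]) = 0 :=
    hrank ▸ minpoly_frobeniusAlgHom Fq Fqn ▸ minpoly.aeval _ _
  rw [isNormal_iff_linearIndependent hn hrank] at hα ⊢
  simp_rw [← frobeniusAlgHom_toLinearMap_pow_apply, circ_eq_aeval_frobeniusAlgHom] at hα ⊢
  have hdeg : (X ^ n - 1 : Fq[X]).degree = n := by
    rw [← C_1, degree_X_pow_sub_C hn]
  rw [linearIndependent_pow_apply_aeval_iff_isCoprime _ hdeg hP hα, hfact,
    isCoprime_prod_pow_iff_forall_isCoprime_mod _ _ (pow_ne_zero _ hp.ne_zero)]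

theorem stmt7 (p m q n : ℕ) [Field Fq] [Fintype Fq] [Field Fqn] [Algebra Fq Fqn]
    (hp : p.Prime) (hm : 0 < m) (hpq : q = p ^ m) (hcard : Fintype.card Fq = q)
    (hn : 0 < n) (hrank : Module.finrank Fq Fqn = n)
    (r : ℕ) (f : Fin r → Fq[X]) (hirr : ∀ i, Irreducible (f i))
    (hmonic : ∀ i, (f i).Monic) (hinj : Function.Injective f)
    (hfact : (X : Fq[X]) ^ n - 1 = ∏ i, f i ^ p ^ padicValNat p n)
    (α : Fqn) (hα : IsNormal Fq q n α) (g : Fq[X]) :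
    IsNormal Fq q n (circ q g α) ↔ ∀ i, IsCoprime (f i) (g % f i ^ p ^ padicValNat p n) :=
  stmt7_general p q n hp hcard hn hrank r f hfact α hα g
end

section
/- In F_q[x], one has (1 + x + ⋯ + x^{n−1}) ≡ (n/τ)·(x − 1)^{τ−1} (mod (x−1)^τ), where τ = p^{v_p(n)} and q is a power of p. -/
open Polynomial

variable {Fq Fqn : Type*}

/-!
In characteristic `p`, `(X ^ k - 1) ^ p ^ v = X ^ (k * p ^ v) - 1`; dividing by `X - 1` gives
`∑_{i < k p^v} X^i = (X - 1) ^ (p ^ v - 1) * T ^ p ^ v` with `T = ∑_{i < k} X^i`.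
Modulo `X - 1`, `T ^ p ^ v` is congruent to `T(1) ^ p ^ v = k ^ p ^ v = k`.
-/

open Finset

section ExpChar

variable {R : Type*} [CommRing R] (p : ℕ) [ExpChar R p]

theorem geom_sum_X_mul_expChar_pow (k v : ℕ) :
    ∑ i ∈ range (k * p ^ v), (X : R[X]) ^ i =
      (X - 1) ^ (p ^ v - 1) * (∑ i ∈ range k, (X : R[X]) ^ i) ^ p ^ v := by
  refine (monic_X_sub_C (1 : R)).isRegular.right ?_
  simp only [map_one]
  calc (∑ i ∈ range (k * p ^ v), (X : R[X]) ^ i) * (X - 1)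
      = (X ^ k) ^ p ^ v - 1 := by rw [geom_sum_mul, pow_mul]
    _ = ((∑ i ∈ range k, (X : R[X]) ^ i) * (X - 1)) ^ p ^ v := by
      rw [geom_sum_mul, sub_pow_expChar_pow, one_pow]
    _ = (X - 1) ^ (p ^ v - 1) * (∑ i ∈ range k, (X : R[X]) ^ i) ^ p ^ v * (X - 1) := by
      rw [mul_pow, mul_right_comm, ← pow_succ, Nat.sub_add_cancel (pow_pos (expChar_pos R p) v),
        mul_comm]

theorem X_sub_one_dvd_geom_sum_pow_sub (k v : ℕ) :
    X - 1 ∣ (∑ i ∈ range k, (X : R[X]) ^ i) ^ p ^ v - C (k : R) := by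
  have h : (X - C 1 : R[X]) ∣ (∑ i ∈ range k, (X : R[X]) ^ i) ^ p ^ v - C (k : R) := by
    rw [dvd_iff_isRoot, IsRoot, eval_sub, eval_pow, eval_finsetSum]
    simp only [eval_pow, eval_X, eval_C, one_pow, sum_const, card_range, nsmul_one]
    rw [← iterateFrobenius_def, map_natCast, sub_self]
  simpa using h

theorem X_sub_one_pow_dvd_geom_sum_sub (k v : ℕ) :
    (X - 1) ^ p ^ v ∣
      ∑ i ∈ range (k * p ^ v), (X : R[X]) ^ i - C (k : R) * (X - 1) ^ (p ^ v - 1) := by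
  have h : (X - 1 : R[X]) ^ p ^ v = (X - 1) ^ (p ^ v - 1) * (X - 1) := by
    rw [← pow_succ, Nat.sub_add_cancel (pow_pos (expChar_pos R p) v)]
  rw [h, mul_comm (C _), geom_sum_X_mul_expChar_pow, ← mul_sub]
  exact mul_dvd_mul_left _ (X_sub_one_dvd_geom_sum_pow_sub p k v)

end ExpChar

theorem stmt11_general (p n : ℕ) [Field Fq]
    (hp : p.Prime) [CharP Fq p] :
    ((X : Fq[X]) - 1) ^ p ^ padicValNat p n ∣
      (∑ i ∈ Finset.range n, (X : Fq[X]) ^ i) -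
        C ((n / p ^ padicValNat p n : ℕ) : Fq) * ((X : Fq[X]) - 1) ^ (p ^ padicValNat p n - 1) := by
  have := Fact.mk hp
  simpa only [Nat.div_mul_cancel pow_padicValNat_dvd] using
    X_sub_one_pow_dvd_geom_sum_sub (R := Fq) p (n / p ^ padicValNat p n) (padicValNat p n)

theorem stmt11 (p m q n : ℕ) [Field Fq] [Fintype Fq]
    (hp : p.Prime) (hm : 0 < m) (hpq : q = p ^ m) [CharP Fq p]
    (hcard : Fintype.card Fq = q) (hn : 0 < n) :
    ((X : Fq[X]) - 1) ^ p ^ padicValNat p n ∣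
      (∑ i ∈ Finset.range n, (X : Fq[X]) ^ i) -
        C ((n / p ^ padicValNat p n : ℕ) : Fq) * ((X : Fq[X]) - 1) ^ (p ^ padicValNat p n - 1) :=
  stmt11_general p n hp
end

section
/- Let q be a power of a prime p, suppose p divides n, and let α be a normal element of F_{q^n} over F_q. If β is a normal element of F_{q^n} over F_q, then β − c is also normal for every c ∈ F_q. -/
open Polynomial

variable {Fq Fqn : Type*}

/-! Write `c` in the normal basis `vᵢ = β^(q^i)`, `c = ∑ dᵢ vᵢ`. The Frobenius `x ↦ x^q` permutes
the `vᵢ` cyclically and fixes `c`, so all `dᵢ` are equal and `∑ dᵢ = n d₀ = 0` because `p ∣ n`.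
A relation `∑ aᵢ (vᵢ - c) = 0` then reads `aᵢ = (∑ a) dᵢ` for all `i`; summing gives
`∑ a = (∑ a)(∑ d) = 0`, hence every `aᵢ = 0`. -/

theorem LinearIndependent.sub_sum_smul {K M ι : Type*} [Field K] [AddCommGroup M] [Module K M]
    [Fintype ι] {v : ι → M} (hv : LinearIndependent K v) {d : ι → K} (hd : ∑ i, d i ≠ 1) :
    LinearIndependent K fun i => v i - ∑ j, d j • v j := by
  rw [Fintype.linearIndependent_iff]
  intro a ha
  simp only [smul_sub, Finset.sum_sub_distrib, sub_eq_zero, ← Finset.sum_smul] at ha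
  have hcoeff : ∀ i, a i = (∑ j, a j) * d i := by
    refine Fintype.linearIndependent_iffₛ.mp hv _ _ ?_
    simp only [ha, Finset.smul_sum, mul_smul]
  have hsum : ∑ j, a j = 0 := by
    have h : (∑ j, a j) * (1 - ∑ i, d i) = 0 := by
      rw [mul_sub, mul_one, Finset.mul_sum, sub_eq_zero]
      exact Finset.sum_congr rfl fun i _ => hcoeff i
    exact (mul_eq_zero.mp h).resolve_right (sub_ne_zero.mpr hd.symm)
  intro i
  rw [hcoeff i, hsum, zero_mul]

theorem LinearIndependent.coeff_apply_perm_eq {R M ι : Type*} [Ring R] [AddCommGroup M]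
    [Module R M] [Fintype ι] {v : ι → M} (hv : LinearIndependent R v) (f : M →ₗ[R] M)
    (e : ι ≃ ι) (hf : ∀ i, f (v i) = v (e i)) {d : ι → R}
    (hd : f (∑ i, d i • v i) = ∑ i, d i • v i) (i : ι) : d (e i) = d i := by
  have h : ∑ i, d i • v (e i) = ∑ i, d (e i) • v (e i) := by
    rw [e.sum_comp fun j => d j • v j]
    simpa only [map_sum, map_smul, hf] using hd
  exact (Fintype.linearIndependent_iffₛ.mp (hv.comp e e.injective) _ _ h i).symm

open Fin.NatCast in
theorem Fin.apply_eq_apply_zero_of_apply_add_one {α : Type*} {n : ℕ} [NeZero n] {d : Fin n → α}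
    (h : ∀ i, d (i + 1) = d i) (i : Fin n) : d i = d 0 := by
  obtain ⟨k, rfl⟩ : ∃ k : ℕ, (k : Fin n) = i := ⟨i, Fin.cast_val_eq_self i⟩
  induction k with
  | zero => simp
  | succ k ih => rw [Nat.cast_succ, h, ih]

theorem Function.IsPeriodicPt.iterate_val_add_one {α : Type*} {f : α → α} {n : ℕ} [NeZero n]
    {x : α} (h : Function.IsPeriodicPt f n x) (i : Fin n) :
    f^[((i + 1 : Fin n) : ℕ)] x = f (f^[i] x) := by
  rw [Fin.val_add, Fin.val_one', Nat.add_mod_mod, h.iterate_mod_apply,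
    Function.iterate_succ_apply']

namespace FiniteField

variable (K R : Type*) [Field K] [Fintype K] [CommRing R] [Algebra K R]

theorem frobeniusAlgHom_pow_apply (i : ℕ) (x : R) :
    (frobeniusAlgHom K R ^ i) x = x ^ Fintype.card K ^ i := by
  rw [AlgHom.coe_pow, coe_frobeniusAlgHom, pow_iterate]

variable {K R}

theorem sub_algebraMap_pow_card_pow (i : ℕ) (x : R) (c : K) :
    (x - algebraMap K R c) ^ Fintype.card K ^ i = x ^ Fintype.card K ^ i - algebraMap K R c := by
  rw [← frobeniusAlgHom_pow_apply, map_sub, AlgHom.commutes, frobeniusAlgHom_pow_apply]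

end FiniteField

open FiniteField in
theorem IsNormal.sub_algebraMap [Field Fq] [Fintype Fq] [Field Fqn] [Algebra Fq Fqn] {n : ℕ}
    [NeZero n] {β : Fqn} (hβ : IsNormal Fq (Fintype.card Fq) n β) (hn : (n : Fq) = 0) (c : Fq) :
    IsNormal Fq (Fintype.card Fq) n (β - algebraMap Fq Fqn c) := by
  set q := Fintype.card Fq
  set v : Fin n → Fqn := fun i => β ^ q ^ (i : ℕ)
  obtain ⟨hli, hsp⟩ := hβ
  let b := Module.Basis.mk hli hsp.ge
  have : Fintype Fqn := Module.fintypeOfFintype b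
  have hper : Function.IsPeriodicPt (· ^ q) n β := by
    rw [Function.IsPeriodicPt, Function.IsFixedPt, pow_iterate, ← Fintype.card_fin n,
      ← Module.card_fintype b]
    exact pow_card β
  have hfrob : ∀ i, frobeniusAlgHom Fq Fqn (v i) = v (Equiv.addRight 1 i) := fun i => by
    show (β ^ q ^ (i : ℕ)) ^ q = β ^ q ^ ((i + 1 : Fin n) : ℕ)
    simpa only [pow_iterate] using (hper.iterate_val_add_one i).symm
  obtain ⟨d, hd⟩ := (Submodule.mem_span_range_iff_exists_fun Fq).mp
    (hsp ▸ Submodule.mem_top : algebraMap Fq Fqn c ∈ Submodule.span Fq (Set.range v))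
  have hshift : ∀ i, d (i + 1) = d i :=
    hli.coeff_apply_perm_eq (frobeniusAlgHom Fq Fqn).toLinearMap _ hfrob
      (by simpa only [AlgHom.toLinearMap_apply, hd] using (frobeniusAlgHom Fq Fqn).commutes c)
  have hdsum : ∑ i, d i = 0 := by
    simp [Fin.apply_eq_apply_zero_of_apply_add_one hshift, hn]
  have hli' : LinearIndependent Fq fun i : Fin n => (β - algebraMap Fq Fqn c) ^ q ^ (i : ℕ) := by
    have hconj : (fun i : Fin n => (β - algebraMap Fq Fqn c) ^ q ^ (i : ℕ)) =
        fun i => v i - ∑ j, d j • v j := by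
      funext i
      rw [sub_algebraMap_pow_card_pow, hd]
    rw [hconj]
    exact hli.sub_sum_smul (by rw [hdsum]; exact zero_ne_one)
  refine ⟨hli', hli'.span_eq_top_of_card_eq_finrank ?_⟩
  rw [Module.finrank_eq_card_basis b]

theorem stmt13_general (p m q n : ℕ) [Field Fq] [Fintype Fq] [Field Fqn] [Algebra Fq Fqn]
    (hpq : q = p ^ m) (hcard : Fintype.card Fq = q)
    (hn : 0 < n) (hpn : p ∣ n)
    (β : Fqn) (hβ : IsNormal Fq q n β) (c : Fq) :
    IsNormal Fq q n (β - algebraMap Fq Fqn c) := by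
  have : NeZero n := ⟨hn.ne'⟩
  subst hcard
  have hp : (p : Fq) = 0 :=
    eq_zero_of_pow_eq_zero (by rw [← Nat.cast_pow, ← hpq, FiniteField.cast_card_eq_zero])
  obtain ⟨k, rfl⟩ := hpn
  exact hβ.sub_algebraMap (by rw [Nat.cast_mul, hp, zero_mul]) c

theorem stmt13 (p m q n : ℕ) [Field Fq] [Fintype Fq] [Field Fqn] [Algebra Fq Fqn]
    (hp : p.Prime) (hm : 0 < m) (hpq : q = p ^ m) (hcard : Fintype.card Fq = q)
    (hn : 0 < n) (hpn : p ∣ n) (hrank : Module.finrank Fq Fqn = n)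
    (α : Fqn) (hα : IsNormal Fq q n α)
    (β : Fqn) (hβ : IsNormal Fq q n β) (c : Fq) :
    IsNormal Fq q n (β - algebraMap Fq Fqn c) :=
  stmt13_general p m q n hpq hcard hn hpn β hβ c
end

section
/- Suppose (x^n − 1)/(x − 1) is irreducible over F_q (equivalently q is primitive modulo n), and let α be a normal element of F_{q^n} with trace n ≠ 0 in F_q. Then the number of (α, 2)-sociable elements of F_{q^n} is (q − 2)(q^{n−1} − n − 1), and the number of (α, 2)-lonely elements is (q − 2)(n − 1). -/
open Polynomial

variable {Fq Fqn : Type*}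

/-! Over `F = 𝔽_q` we have `X ^ n - 1 = Φ * (X - 1)` with `Φ = 1 + X + ⋯ + X ^ (n - 1)`
irreducible. A nonzero polynomial of degree `< n` killing `β` under Frobenius is either a scalar
multiple of `Φ` or coprime to `Φ`, and then `X - 1` kills `β` as well. As `Φ` acts as the trace and
`X - 1` kills exactly `F`, `β` is normal iff `Tr β ≠ 0` and `β ∉ F`. Since
`σ β - α = σ (β - σ⁻¹ α)`, `β` is `(α, 2)`-sociable iff `Tr β ∉ {0, n}` and `β` avoids the `n + 1`
cosets `F` and `σ α + F` (`σ ∈ Gal(K/F)`), which are distinct because `Tr (σ α - τ α) = 0` while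
`n ≠ 0` in `F`. As `x ↦ (x + F, Tr x)` is a bijection `K → K ⧸ F × F`, each coset holds exactly
`q - 2` elements of trace outside `{0, n}`. The lonely elements are the `σ α + c` with `σ ≠ 1` and
`c ∉ {0, -1}`. -/

namespace Module.End

variable {F V : Type*} [Field F] [AddCommGroup V] [Module F V] (φ : Module.End F V) (β : V)

theorem mem_torsionOf_aeval_iff (f : F[X]) :
    f ∈ Ideal.torsionOf F[X] (AEval' φ) (AEval'.of φ β) ↔ aeval φ f β = 0 := by
  rw [Ideal.mem_torsionOf_iff, ← AEval.of_aeval_smul, LinearEquiv.map_eq_zero_iff]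
  rfl

theorem linearIndependent_pow_apply_of_le_natDegree {n : ℕ}
    (h : ∀ f : F[X], f ≠ 0 → aeval φ f β = 0 → n ≤ f.natDegree) :
    LinearIndependent F fun i : Fin n => (φ ^ (i : ℕ)) β := by
  rw [Fintype.linearIndependent_iff]
  intro g hg
  set f : F[X] := ∑ i : Fin n, C (g i) * X ^ (i : ℕ)
  have hcoeff (i : Fin n) : f.coeff i = g i := by
    simp [f, coeff_C_mul, coeff_X_pow, Fin.val_inj]
  have hf : aeval φ f β = 0 := by simpa [f, Algebra.smul_def] using hg
  have hf0 : f = 0 := by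
    by_contra hf0
    exact (h f hf0 hf).not_gt ((natDegree_lt_iff_degree_lt hf0).2 (degree_sum_fin_lt g))
  intro i
  rw [← hcoeff, hf0, coeff_zero]

theorem le_natDegree_of_aeval_apply_eq_zero {n : ℕ}
    (hirr : Irreducible (∑ i ∈ Finset.range n, X ^ i : F[X])) (hper : (φ ^ n) β = β)
    (hsum : aeval φ (∑ i ∈ Finset.range n, X ^ i : F[X]) β ≠ 0) (hfix : φ β ≠ β)
    {f : F[X]} (hf0 : f ≠ 0) (hf : aeval φ f β = 0) : n ≤ f.natDegree := by
  set I := Ideal.torsionOf F[X] (AEval' φ) (AEval'.of φ β)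
  set Φ : F[X] := ∑ i ∈ Finset.range n, X ^ i
  have hΦ : Φ ∉ I := by rwa [mem_torsionOf_aeval_iff]
  have hX1 : X - 1 ∉ I := by
    rw [mem_torsionOf_aeval_iff]
    simpa [sub_eq_zero] using hfix
  have hXn : Φ * (X - 1) ∈ I := by
    rw [geom_sum_mul, mem_torsionOf_aeval_iff]
    simp [hper]
  have hfI : f ∈ I := (mem_torsionOf_aeval_iff φ β f).2 hf
  have hΦdeg : Φ.natDegree + 1 = n := by
    have h := congrArg natDegree (geom_sum_mul (X : F[X]) n)
    rwa [← C_1, natDegree_mul hirr.ne_zero (X_sub_C_ne_zero 1), natDegree_X_sub_C,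
      natDegree_X_pow_sub_C] at h
  by_contra! hlt
  by_cases hdvd : Φ ∣ f
  · obtain ⟨g, rfl⟩ := hdvd
    have hg0 : g ≠ 0 := right_ne_zero_of_mul hf0
    rw [natDegree_mul hirr.ne_zero hg0] at hlt
    obtain ⟨c, rfl⟩ := natDegree_eq_zero.1 (by omega : g.natDegree = 0)
    have hc : c ≠ 0 := by
      rintro rfl
      exact hg0 C_0
    apply hΦ
    simpa [mul_assoc, ← C_mul, hc] using I.mul_mem_right (C c⁻¹) hfI
  · obtain ⟨a, b, hab⟩ := hirr.coprime_iff_not_dvd.2 hdvd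
    have hX1_eq : X - 1 = a * (Φ * (X - 1)) + b * (X - 1) * f := by
      linear_combination -(X - 1) * hab
    exact hX1 (hX1_eq ▸ add_mem (I.mul_mem_left a hXn) (I.mul_mem_left _ hfI))

end Module.End

theorem AlgEquiv.apply_mem_range_algebraMap_iff {R A B : Type*} [CommSemiring R] [Semiring A]
    [Semiring B] [Algebra R A] [Algebra R B] (σ : A ≃ₐ[R] B) {x : A} :
    σ x ∈ Set.range (algebraMap R B) ↔ x ∈ Set.range (algebraMap R A) :=
  ⟨fun ⟨c, hc⟩ => ⟨c, σ.injective (by rw [σ.commutes, hc])⟩,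
    fun ⟨c, hc⟩ => ⟨c, by rw [← hc, σ.commutes]⟩⟩

section TraceQuotient

open Module

variable {F K : Type*} [Field F] [Field K] [Algebra F K]

theorem eq_zero_of_mem_range_algebraMap_of_trace_eq_zero (hn0 : (finrank F K : F) ≠ 0)
    {x : K} (hx : x ∈ Set.range (algebraMap F K)) (htr : Algebra.trace F K x = 0) : x = 0 := by
  obtain ⟨c, rfl⟩ := hx
  rw [Algebra.trace_algebraMap, nsmul_eq_mul, mul_eq_zero] at htr
  simp [htr.resolve_left hn0]

-- `(1 : Submodule F K)` is the image of `F` in `K`.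
theorem bijective_mk_one_trace (hn0 : (finrank F K : F) ≠ 0) :
    Function.Bijective fun x : K =>
      ((Submodule.Quotient.mk x : K ⧸ (1 : Submodule F K)), Algebra.trace F K x) := by
  refine ⟨fun x y h => ?_, fun ⟨e', t⟩ => ?_⟩
  · simp only [Prod.mk.injEq, Submodule.Quotient.eq] at h
    exact sub_eq_zero.1 <| eq_zero_of_mem_range_algebraMap_of_trace_eq_zero hn0
      (Submodule.mem_one.1 h.1) (by rw [map_sub, h.2, sub_self])
  · obtain ⟨e, rfl⟩ := Submodule.Quotient.mk_surjective _ e'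
    set c := (t - Algebra.trace F K e) / finrank F K
    refine ⟨e + algebraMap F K c, Prod.ext ?_ ?_⟩
    · dsimp only
      rw [Submodule.Quotient.eq, add_sub_cancel_left]
      exact Submodule.mem_one.2 ⟨c, rfl⟩
    · dsimp only
      rw [map_add, Algebra.trace_algebraMap, nsmul_eq_mul, mul_div_cancel₀ _ hn0,
        add_sub_cancel]

variable [Fintype F] [Finite K]

theorem natCard_quotient_one (hn0 : (finrank F K : F) ≠ 0) :
    Nat.card (K ⧸ (1 : Submodule F K)) = Fintype.card F ^ (finrank F K - 1) := by
  have h := Nat.card_congr (Equiv.ofBijective _ (bijective_mk_one_trace hn0))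
  rw [Nat.card_prod, natCard_eq_pow_finrank (K := F), Nat.card_eq_fintype_card,
    ← Nat.sub_one_add_one finrank_pos.ne', pow_succ] at h
  exact (Nat.eq_of_mul_eq_mul_right Fintype.card_pos h).symm

theorem ncard_setOf_trace_notMem_and_mk_notMem (hn0 : (finrank F K : F) ≠ 0)
    (A : Set F) (S : Set (K ⧸ (1 : Submodule F K))) :
    {x : K | Algebra.trace F K x ∉ A ∧ Submodule.Quotient.mk x ∉ S}.ncard =
      (Fintype.card F - A.ncard) * (Fintype.card F ^ (finrank F K - 1) - S.ncard) := by
  have : Finite (K ⧸ (1 : Submodule F K)) :=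
    Finite.of_surjective _ (Submodule.Quotient.mk_surjective _)
  have hbij := bijective_mk_one_trace hn0
  have hset : {x : K | Algebra.trace F K x ∉ A ∧ Submodule.Quotient.mk x ∉ S} =
      (fun x : K => ((Submodule.Quotient.mk x : K ⧸ (1 : Submodule F K)), Algebra.trace F K x)) ⁻¹'
        (Sᶜ ×ˢ Aᶜ) := by
    ext
    simp [and_comm]
  rw [hset, Set.ncard_preimage_of_injective_subset_range hbij.1 (by simp [hbij.2.range_eq]),
    Set.ncard_prod, Set.ncard_compl, Set.ncard_compl, natCard_quotient_one hn0,
    Nat.card_eq_fintype_card, mul_comm]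

end TraceQuotient

section NormalElements

open Module

variable {F K : Type*} [Field F] [Fintype F] [Field K] [Algebra F K] [Finite K] {α β x : K}

local notation "𝒩" => IsNormal F (Fintype.card F) (finrank F K)

namespace FiniteField

theorem frobeniusAlgEquivOfAlgebraic_pow_apply (i : ℕ) (x : K) :
    (frobeniusAlgEquivOfAlgebraic F K ^ i) x = x ^ Fintype.card F ^ i := by
  rw [AlgEquiv.coe_pow, coe_frobeniusAlgEquivOfAlgebraic_iterate]

theorem pow_card_pow_finrank (x : K) : x ^ Fintype.card F ^ finrank F K = x := by
  rw [← frobeniusAlgEquivOfAlgebraic_pow_apply, ← orderOf_frobeniusAlgEquivOfAlgebraic,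
    pow_orderOf_eq_one, AlgEquiv.one_apply]

theorem forall_pow_card_pow_iff_forall_algEquiv {P : K → Prop} :
    (∀ i < finrank F K, P (x ^ Fintype.card F ^ i)) ↔ ∀ σ : Gal(K/F), P (σ x) := by
  refine ⟨fun h σ => ?_, fun h i _ => ?_⟩
  · obtain ⟨i, rfl⟩ := (bijective_frobeniusAlgEquivOfAlgebraic_pow F K).2 σ
    simpa [frobeniusAlgEquivOfAlgebraic_pow_apply] using h i i.2
  · simpa [frobeniusAlgEquivOfAlgebraic_pow_apply] using h (frobeniusAlgEquivOfAlgebraic F K ^ i)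

theorem pow_card_eq_self_iff_mem_range_algebraMap :
    x ^ Fintype.card F = x ↔ x ∈ Set.range (algebraMap F K) := by
  rw [IsGalois.mem_range_algebraMap_iff_fixed]
  refine ⟨fun h σ => ?_, fun h => h (frobeniusAlgEquivOfAlgebraic F K)⟩
  obtain ⟨i, rfl⟩ := (bijective_frobeniusAlgEquivOfAlgebraic_pow F K).2 σ
  rw [AlgEquiv.coe_pow]
  exact Function.iterate_fixed h _

theorem sum_pow_card_pow_eq_algebraMap_trace (x : K) :
    ∑ i ∈ Finset.range (finrank F K), x ^ Fintype.card F ^ i =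
      algebraMap F K (Algebra.trace F K x) := by
  rw [algebraMap_trace_eq_sum_pow, Nat.card_eq_fintype_card]

end FiniteField

theorem IsNormal.trace_ne_zero (hx : 𝒩 x) : Algebra.trace F K x ≠ 0 := by
  intro h
  have hsum : ∑ i : Fin (finrank F K), (1 : F) • x ^ Fintype.card F ^ (i : ℕ) = 0 := by
    simpa [Fin.sum_univ_eq_sum_range (fun i => x ^ Fintype.card F ^ i), h] using
      FiniteField.sum_pow_card_pow_eq_algebraMap_trace (F := F) x
  exact one_ne_zero (Fintype.linearIndependent_iff.1 hx.1 _ hsum ⟨0, finrank_pos⟩)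

theorem IsNormal.notMem_range_algebraMap (hn : 2 ≤ finrank F K) (hx : 𝒩 x) :
    x ∉ Set.range (algebraMap F K) := by
  intro h
  have h01 := hx.1.injective (a₁ := ⟨0, by omega⟩) (a₂ := ⟨1, hn⟩)
  simp [FiniteField.pow_card_eq_self_iff_mem_range_algebraMap.2 h] at h01

theorem IsNormal.injective_algEquiv_apply (hα : 𝒩 α) :
    Function.Injective fun σ : Gal(K/F) => σ α := by
  intro σ τ h
  obtain ⟨i, rfl⟩ := (FiniteField.bijective_frobeniusAlgEquivOfAlgebraic_pow F K).2 σ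
  obtain ⟨j, rfl⟩ := (FiniteField.bijective_frobeniusAlgEquivOfAlgebraic_pow F K).2 τ
  have : i = j := hα.1.injective <| by
    simpa [FiniteField.frobeniusAlgEquivOfAlgebraic_pow_apply] using h
  rw [this]

theorem isNormal_of_trace_ne_zero_of_notMem_range
    (hirr : Irreducible (∑ i ∈ Finset.range (finrank F K), (X : F[X]) ^ i))
    (htr : Algebra.trace F K x ≠ 0) (hx : x ∉ Set.range (algebraMap F K)) : 𝒩 x := by
  set φ := (FiniteField.frobeniusAlgHom F K).toLinearMap
  have hφ (i : ℕ) (y : K) : (φ ^ i) y = y ^ Fintype.card F ^ i := by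
    simp [φ, Module.End.coe_pow, FiniteField.coe_frobeniusAlgHom, pow_iterate]
  have hli : LinearIndependent F fun i : Fin (finrank F K) => x ^ Fintype.card F ^ (i : ℕ) := by
    simp_rw [← hφ]
    refine Module.End.linearIndependent_pow_apply_of_le_natDegree φ x fun f hf0 hf =>
      Module.End.le_natDegree_of_aeval_apply_eq_zero φ x hirr ?_ ?_ ?_ hf0 hf
    · rw [hφ, FiniteField.pow_card_pow_finrank]
    · simpa [map_sum, hφ, FiniteField.sum_pow_card_pow_eq_algebraMap_trace] using htr
    · rwa [show φ x = x ^ Fintype.card F from rfl, Ne,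
        FiniteField.pow_card_eq_self_iff_mem_range_algebraMap]
  have : Nonempty (Fin (finrank F K)) := ⟨⟨0, finrank_pos⟩⟩
  exact ⟨hli, hli.span_eq_top_of_card_eq_finrank (Fintype.card_fin _)⟩

theorem isNormal_iff (hn : 2 ≤ finrank F K)
    (hirr : Irreducible (∑ i ∈ Finset.range (finrank F K), (X : F[X]) ^ i)) :
    𝒩 x ↔ Algebra.trace F K x ≠ 0 ∧ x ∉ Set.range (algebraMap F K) :=
  ⟨fun hx => ⟨hx.trace_ne_zero, hx.notMem_range_algebraMap hn⟩,
    fun h => isNormal_of_trace_ne_zero_of_notMem_range hirr h.1 h.2⟩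

theorem isNormal_algEquiv_apply_iff (hn : 2 ≤ finrank F K)
    (hirr : Irreducible (∑ i ∈ Finset.range (finrank F K), (X : F[X]) ^ i)) (σ : Gal(K/F)) :
    𝒩 (σ x) ↔ 𝒩 x := by
  simp only [isNormal_iff hn hirr, Algebra.trace_eq_of_algEquiv,
    σ.apply_mem_range_algebraMap_iff]

theorem forall_isNormal_pow_card_pow_iff (hn : 2 ≤ finrank F K)
    (hirr : Irreducible (∑ i ∈ Finset.range (finrank F K), (X : F[X]) ^ i)) :
    (∀ i : ℕ, i < finrank F K →
        𝒩 (β ^ Fintype.card F ^ i) ∧ 𝒩 (β ^ Fintype.card F ^ i - α)) ↔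
      𝒩 β ∧ ∀ σ : Gal(K/F), 𝒩 (β - σ α) := by
  rw [FiniteField.forall_pow_card_pow_iff_forall_algEquiv (P := fun y => 𝒩 y ∧ 𝒩 (y - α))]
  have hconj (σ : Gal(K/F)) : σ β - α = σ (β - σ⁻¹ α) := by simp
  simp only [hconj, isNormal_algEquiv_apply_iff hn hirr]
  exact ⟨fun h => ⟨(h 1).1, fun σ => by simpa using (h σ⁻¹).2⟩, fun h σ => ⟨h.1, h.2 _⟩⟩

theorem algEquiv_apply_sub_mem_range_algebraMap_iff (hn0 : (finrank F K : F) ≠ 0) (hα : 𝒩 α)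
    {σ τ : Gal(K/F)} :
    σ α - τ α ∈ Set.range (algebraMap F K) ↔ σ = τ := by
  refine ⟨fun h => hα.injective_algEquiv_apply (sub_eq_zero.1 ?_), fun h => ⟨0, by simp [h]⟩⟩
  exact eq_zero_of_mem_range_algebraMap_of_trace_eq_zero hn0 h
    (by simp [Algebra.trace_eq_of_algEquiv])

theorem ncard_setOf_sociable (hn : 2 ≤ finrank F K)
    (hirr : Irreducible (∑ i ∈ Finset.range (finrank F K), (X : F[X]) ^ i))
    (hn0 : (finrank F K : F) ≠ 0) (hα : 𝒩 α) (htr : Algebra.trace F K α = finrank F K) :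
    {β : K | 𝒩 β ∧ ∀ σ : Gal(K/F), 𝒩 (β - σ α)}.ncard =
      (Fintype.card F - 2) * (Fintype.card F ^ (finrank F K - 1) - finrank F K - 1) := by
  set mk := (Submodule.Quotient.mk : K → K ⧸ (1 : Submodule F K))
  have hmk {x y : K} : mk x = mk y ↔ x - y ∈ Set.range (algebraMap F K) :=
    (Submodule.Quotient.eq _).trans Submodule.mem_one
  have hset : {β : K | 𝒩 β ∧ ∀ σ : Gal(K/F), 𝒩 (β - σ α)} =
      {x | Algebra.trace F K x ∉ ({0, (finrank F K : F)} : Set F) ∧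
        mk x ∉ insert (mk 0) (Set.range fun σ : Gal(K/F) => mk (σ α))} := by
    ext β
    have hmk' (σ : Gal(K/F)) : mk (σ α) = mk β ↔ β - σ α ∈ Set.range (algebraMap F K) := by
      rw [eq_comm, hmk]
    have hmk0 : mk β = mk 0 ↔ β ∈ Set.range (algebraMap F K) := by rw [hmk, sub_zero]
    simp only [Set.mem_ofPred_eq, isNormal_iff hn hirr, map_sub, Algebra.trace_eq_of_algEquiv,
      htr, sub_ne_zero, forall_and, forall_const, Set.mem_insert_iff, hmk0, Set.mem_singleton_iff,
      not_or, Set.mem_range, hmk', not_exists]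
    tauto
  have hinj : Function.Injective fun σ : Gal(K/F) => mk (σ α) := fun σ τ h =>
    (algEquiv_apply_sub_mem_range_algebraMap_iff hn0 hα).1 (hmk.1 h)
  have h0 : mk 0 ∉ Set.range fun σ : Gal(K/F) => mk (σ α) := by
    rintro ⟨σ, hσ⟩
    refine hα.notMem_range_algebraMap hn (σ.apply_mem_range_algebraMap_iff.1 ?_)
    simpa using hmk.1 hσ
  rw [hset, ncard_setOf_trace_notMem_and_mk_notMem hn0, Set.ncard_pair (Ne.symm hn0),
    Set.ncard_insert_of_notMem h0, Set.ncard_range_of_injective hinj,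
    IsGalois.card_aut_eq_finrank, Nat.sub_sub]

theorem isNormal_algEquiv_apply_add_algebraMap_iff (hn : 2 ≤ finrank F K)
    (hirr : Irreducible (∑ i ∈ Finset.range (finrank F K), (X : F[X]) ^ i))
    (hn0 : (finrank F K : F) ≠ 0) (hα : 𝒩 α)
    (htr : Algebra.trace F K α = finrank F K) (σ : Gal(K/F)) (c : F) :
    𝒩 (σ α + algebraMap F K c) ↔ c ≠ -1 := by
  have hR : σ α + algebraMap F K c ∉ Set.range (algebraMap F K) := fun ⟨d, hd⟩ =>
    hα.notMem_range_algebraMap hn <| σ.apply_mem_range_algebraMap_iff.1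
      ⟨d - c, by rw [map_sub, hd, add_sub_cancel_right]⟩
  rw [isNormal_iff hn hirr, map_add, Algebra.trace_eq_of_algEquiv, htr, Algebra.trace_algebraMap,
    nsmul_eq_mul, ← mul_one_add, Ne, Ne, eq_neg_iff_add_eq_zero, add_comm c]
  simp [hn0, hR]

theorem isNormal_algEquiv_apply_add_algebraMap_sub_iff (hn : 2 ≤ finrank F K)
    (hirr : Irreducible (∑ i ∈ Finset.range (finrank F K), (X : F[X]) ^ i))
    (hn0 : (finrank F K : F) ≠ 0) (hα : 𝒩 α) (σ : Gal(K/F)) (c : F) :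
    𝒩 (σ α + algebraMap F K c - α) ↔ σ ≠ 1 ∧ c ≠ 0 := by
  have hR : σ α + algebraMap F K c - α ∈ Set.range (algebraMap F K) ↔ σ = 1 := by
    rw [← algEquiv_apply_sub_mem_range_algebraMap_iff hn0 hα (τ := 1), AlgEquiv.one_apply]
    exact ⟨fun ⟨d, hd⟩ => ⟨d - c, by rw [map_sub, hd]; ring⟩,
      fun ⟨d, hd⟩ => ⟨d + c, by rw [map_add, hd]; ring⟩⟩
  rw [isNormal_iff hn hirr, add_sub_right_comm, map_add, map_sub, Algebra.trace_eq_of_algEquiv,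
    sub_self, zero_add, Algebra.trace_algebraMap, nsmul_eq_mul, ← add_sub_right_comm, hR]
  simp [hn0, and_comm]

theorem setOf_lonely_eq_image (hn : 2 ≤ finrank F K)
    (hirr : Irreducible (∑ i ∈ Finset.range (finrank F K), (X : F[X]) ^ i))
    (hn0 : (finrank F K : F) ≠ 0) (hα : 𝒩 α) (htr : Algebra.trace F K α = finrank F K) :
    {β : K | (𝒩 β ∧ 𝒩 (β - α)) ∧ ¬ (𝒩 β ∧ ∀ σ : Gal(K/F), 𝒩 (β - σ α))} =
      (fun p : Gal(K/F) × F => p.1 α + algebraMap F K p.2) '' ({1}ᶜ ×ˢ {0, -1}ᶜ) := by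
  ext β
  constructor
  · rintro ⟨⟨hβ, hβα⟩, hsoc⟩
    obtain ⟨σ, hσ⟩ : ∃ σ : Gal(K/F), ¬ 𝒩 (β - σ α) := by simpa [hβ] using hsoc
    obtain ⟨c, hc⟩ : β - σ α ∈ Set.range (algebraMap F K) := by
      by_contra h
      refine hσ ((isNormal_iff hn hirr).2 ⟨?_, h⟩)
      simpa [Algebra.trace_eq_of_algEquiv] using hβα.trace_ne_zero
    obtain rfl : β = σ α + algebraMap F K c := by rw [hc, add_sub_cancel]
    rw [isNormal_algEquiv_apply_add_algebraMap_iff hn hirr hn0 hα htr] at hβ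
    rw [isNormal_algEquiv_apply_add_algebraMap_sub_iff hn hirr hn0 hα] at hβα
    exact ⟨(σ, c), ⟨hβα.1, by simp [hβα.2, hβ]⟩, rfl⟩
  · rintro ⟨⟨σ, c⟩, ⟨hσ, hc⟩, rfl⟩
    simp only [Set.mem_compl_iff, Set.mem_singleton_iff, Set.mem_insert_iff, not_or] at hσ hc
    refine ⟨⟨(isNormal_algEquiv_apply_add_algebraMap_iff hn hirr hn0 hα htr σ c).2 hc.2,
      (isNormal_algEquiv_apply_add_algebraMap_sub_iff hn hirr hn0 hα σ c).2 ⟨hσ, hc.1⟩⟩,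
      fun h => (h.2 σ).notMem_range_algebraMap hn ⟨c, by simp⟩⟩

theorem ncard_setOf_lonely (hn : 2 ≤ finrank F K)
    (hirr : Irreducible (∑ i ∈ Finset.range (finrank F K), (X : F[X]) ^ i))
    (hn0 : (finrank F K : F) ≠ 0) (hα : 𝒩 α) (htr : Algebra.trace F K α = finrank F K) :
    {β : K | (𝒩 β ∧ 𝒩 (β - α)) ∧ ¬ (𝒩 β ∧ ∀ σ : Gal(K/F), 𝒩 (β - σ α))}.ncard =
      (Fintype.card F - 2) * (finrank F K - 1) := by
  have hinj : Function.Injective fun p : Gal(K/F) × F => p.1 α + algebraMap F K p.2 := by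
    rintro ⟨σ, c⟩ ⟨τ, d⟩ h
    dsimp only at h
    obtain rfl : σ = τ := (algEquiv_apply_sub_mem_range_algebraMap_iff hn0 hα).1
      ⟨d - c, by rw [map_sub]; linear_combination -h⟩
    simpa using h
  rw [setOf_lonely_eq_image hn hirr hn0 hα htr, Set.ncard_image_of_injective _ hinj,
    Set.ncard_prod, Set.ncard_compl, Set.ncard_compl, Set.ncard_singleton,
    Set.ncard_pair (neg_ne_zero.2 one_ne_zero).symm, IsGalois.card_aut_eq_finrank,
    Nat.card_eq_fintype_card, mul_comm]

end NormalElements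

theorem stmt19_general (q n : ℕ) [Field Fq] [Fintype Fq] [Field Fqn] [Algebra Fq Fqn]
    (hcard : Fintype.card Fq = q)
    (hn : 2 ≤ n) (hrank : Module.finrank Fq Fqn = n)
    (hirr : Irreducible (∑ i ∈ Finset.range n, (X : Fq[X]) ^ i))
    (α : Fqn) (hα : IsNormal Fq q n α) (htr : Algebra.trace Fq Fqn α = (n : Fq))
    (hn0 : (n : Fq) ≠ 0) :
    Set.ncard {β : Fqn | ∀ i : ℕ, i < n →
        IsNormal Fq q n (β ^ q ^ i) ∧ IsNormal Fq q n (β ^ q ^ i - α)} =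
      (q - 2) * (q ^ (n - 1) - n - 1) ∧
    Set.ncard {β : Fqn | (IsNormal Fq q n β ∧ IsNormal Fq q n (β - α)) ∧
        ¬ ∀ i : ℕ, i < n →
          IsNormal Fq q n (β ^ q ^ i) ∧ IsNormal Fq q n (β ^ q ^ i - α)} =
      (q - 2) * (n - 1) := by
  subst hcard hrank
  have : Module.Finite Fq Fqn := Module.finite_of_finrank_pos (by omega)
  have : Finite Fqn := Module.finite_of_finite Fq
  simp only [forall_isNormal_pow_card_pow_iff hn hirr]
  exact ⟨ncard_setOf_sociable hn hirr hn0 hα htr, ncard_setOf_lonely hn hirr hn0 hα htr⟩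

theorem stmt19 (q n : ℕ) [Field Fq] [Fintype Fq] [Field Fqn] [Algebra Fq Fqn]
    (hq : ∃ p k : ℕ, p.Prime ∧ 0 < k ∧ q = p ^ k) (hcard : Fintype.card Fq = q)
    (hn : 2 ≤ n) (hcop : Nat.Coprime n q) (hrank : Module.finrank Fq Fqn = n)
    (hirr : Irreducible (∑ i ∈ Finset.range n, (X : Fq[X]) ^ i))
    (α : Fqn) (hα : IsNormal Fq q n α) (htr : Algebra.trace Fq Fqn α = (n : Fq))
    (hn0 : (n : Fq) ≠ 0) :
    Set.ncard {β : Fqn | ∀ i : ℕ, i < n →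
        IsNormal Fq q n (β ^ q ^ i) ∧ IsNormal Fq q n (β ^ q ^ i - α)} =
      (q - 2) * (q ^ (n - 1) - n - 1) ∧
    Set.ncard {β : Fqn | (IsNormal Fq q n β ∧ IsNormal Fq q n (β - α)) ∧
        ¬ ∀ i : ℕ, i < n →
          IsNormal Fq q n (β ^ q ^ i) ∧ IsNormal Fq q n (β ^ q ^ i - α)} =
      (q - 2) * (n - 1) :=
  stmt19_general q n hcard hn hrank hirr α hα htr hn0
end
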